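/- arXiv:1501.04804 — 2 statements merged into one kernel-verified Lean document; each statement's English description precedes it below -/
import Mathlib

section
/- Let $X=xe^{\mathbf{i}\theta}\in\mathbb{R}^2$ with $x>0$ and $0\le\theta\le\theta_0$, and let $\rho>0$, $l$ with $\rho\le l\le x/2$. Consider the horizontal cylinder $U=X+[-l;0]\times[-\rho;\rho]$ and the radial cylinder $\mathrm{Cyl}(X,\rho)=([O;X]\oplus B(O,\rho))\cap B(O,x)$. Then there are constants $c_0,x_0,\theta_0>0$ depending only on $\rho$ such that for $x\ge x_0$ and $\theta\le\theta_0$, the area of the symmetric-difference-type region $(X+[-l;0]\times[-\rho;\rho])\setminus\mathrm{Cyl}(X,\rho)$ is at most $c_0(l^2\theta+1/x)$. -/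
open Real MeasureTheory Pointwise

/-!
Write `X = x u` with `u = e^{iθ}`; the real and imaginary parts of `z ū` are the position of `z`
along `[O;X]` and its signed distance to that line. Away from the top and bottom strips of height
`l sin θ` of the rectangle, this distance is less than `ρ` and the position is nonnegative, so `z`
lies in `Cyl(X,ρ)` as soon as `‖z‖ < x`. The points with `‖z‖ ≥ x` lie within
`4ρ sin θ + 2ρ²/x` of the right side of the rectangle, because `x² ≤ ‖z‖²` bounds
`(x cos θ - Re z)(x cos θ + Re z)` by `2ρx sin θ + ρ²`. The three strips have total area
`O(l² θ + 1/x)`.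
-/

open Set Metric ComplexConjugate

namespace Complex

theorem volume_reProdIm (s t : Set ℝ) : volume (s ×ℂ t) = volume s * volume t := by
  rw [show s ×ℂ t = measurableEquivRealProd ⁻¹' s ×ˢ t from rfl,
    volume_preserving_equiv_real_prod.measure_preimage_equiv, Measure.volume_eq_prod,
    Measure.prod_prod]

theorem measureReal_reProdIm_Icc {a b c d : ℝ} (hab : a ≤ b) (hcd : c ≤ d) :
    volume.real (Icc a b ×ℂ Icc c d) = (b - a) * (d - c) := by
  rw [measureReal_def, volume_reProdIm, Real.volume_Icc, Real.volume_Icc, ENNReal.toReal_mul,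
    ENNReal.toReal_ofReal (sub_nonneg.2 hab), ENNReal.toReal_ofReal (sub_nonneg.2 hcd)]

theorem sq_norm_eq_re_sq_add_im_sq (z : ℂ) : ‖z‖ ^ 2 = z.re ^ 2 + z.im ^ 2 := by
  rw [Complex.sq_norm, normSq_apply]; ring

end Complex

theorem smul_mem_segment_zero_smul {E : Type*} [AddCommGroup E] [Module ℝ E] (v : E) {t x : ℝ}
    (ht : t ∈ Icc 0 x) : t • v ∈ segment ℝ 0 (x • v) := by
  have h := image_segment ℝ (LinearMap.toSpanSingleton ℝ E v).toAffineMap 0 x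
  simp only [LinearMap.coe_toAffineMap, LinearMap.toSpanSingleton_apply, zero_smul] at h
  exact h ▸ mem_image_of_mem _ ((segment_eq_Icc (ht.1.trans ht.2)).symm ▸ ht)

theorem Complex.mem_segment_add_ball_of_mul_conj {u z : ℂ} {x ρ : ℝ} (hu : ‖u‖ = 1)
    (hre : 0 ≤ (z * conj u).re) (hz : ‖z‖ ≤ x) (him : |(z * conj u).im| < ρ) :
    z ∈ segment ℝ 0 (x • u) + ball 0 ρ := by
  set w := z * conj u
  have hw : ‖w‖ = ‖z‖ := by simp [w, hu]
  have hzw : z = w * u := by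
    rw [mul_assoc, mul_comm (conj u), Complex.mul_conj', hu]; simp
  have hp : w.re • u ∈ segment ℝ 0 (x • u) :=
    smul_mem_segment_zero_smul u ⟨hre, (Complex.re_le_norm w).trans (hw ▸ hz)⟩
  have hdist : dist z (w.re • u) = |w.im| := by
    conv_lhs => rw [hzw, dist_eq_norm, Complex.real_smul, ← sub_mul, norm_mul, hu, mul_one]
    rw [show w - w.re = w.im * Complex.I by simp [Complex.ext_iff]]
    simp
  rw [add_ball_zero]
  exact mem_thickening_iff.2 ⟨_, hp, hdist ▸ him⟩

section Rectangle

variable {u z : ℂ} {x l ρ : ℝ}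

theorem re_mul_conj_nonneg_of_mem_rect (hu : ‖u‖ = 1) (hc : 0 ≤ u.re) (hs : 0 ≤ u.im)
    (hl : 0 ≤ l) (hρ : 0 ≤ ρ) (hlρ : l + ρ ≤ x)
    (hz : z ∈ Ici (x * u.re - l) ×ℂ Ici (x * u.im - ρ)) : 0 ≤ (z * conj u).re := by
  have hunit : u.re ^ 2 + u.im ^ 2 = 1 := by
    rw [← Complex.sq_norm_eq_re_sq_add_im_sq, hu, one_pow]
  have hc1 : u.re ≤ 1 := hu ▸ Complex.re_le_norm u
  have hs1 : u.im ≤ 1 := hu ▸ Complex.im_le_norm u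
  obtain ⟨ha, hb⟩ : x * u.re - l ≤ z.re ∧ x * u.im - ρ ≤ z.im := hz
  simp only [Complex.mul_re, Complex.conj_re, Complex.conj_im]
  nlinarith [mul_le_mul_of_nonneg_right ha hc, mul_le_mul_of_nonneg_right hb hs,
    mul_le_of_le_one_right hl hc1, mul_le_of_le_one_right hρ hs1]

theorem abs_im_mul_conj_lt_of_mem_rect (hu : ‖u‖ = 1) (hc : 0 < u.re) (hs : 0 ≤ u.im)
    (hz : z ∈ Icc (x * u.re - l) (x * u.re) ×ℂ
      Ioo (x * u.im - ρ + l * u.im) (x * u.im + ρ - l * u.im)) :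
    |(z * conj u).im| < ρ := by
  have hc1 : u.re ≤ 1 := hu ▸ Complex.re_le_norm u
  obtain ⟨⟨ha1, ha2⟩, hb1, hb2⟩ := hz
  simp only [Complex.mul_im, Complex.conj_re, Complex.conj_im]
  have hls : l * u.im < ρ := by linarith
  rw [abs_lt]
  constructor
  · nlinarith [mul_le_mul_of_nonneg_right ha2 hs, mul_lt_mul_of_pos_right hb1 hc,
      mul_le_of_le_one_right (sub_nonneg.2 hls.le) hc1]
  · nlinarith [mul_le_mul_of_nonneg_right ha1 hs, mul_lt_mul_of_pos_right hb2 hc,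
      mul_le_of_le_one_right (sub_nonneg.2 hls.le) hc1]

theorem sub_le_re_of_le_norm (hu : ‖u‖ = 1) (hc : 1 / 2 ≤ u.re) (hs : 0 ≤ u.im) (hx : 0 < x)
    (ha : 0 ≤ z.re) (hb : |z.im - x * u.im| ≤ ρ) (hz : x ≤ ‖z‖) :
    x * u.re - (4 * ρ * u.im + 2 * ρ ^ 2 / x) ≤ z.re := by
  have hunit : u.re ^ 2 + u.im ^ 2 = 1 := by
    rw [← Complex.sq_norm_eq_re_sq_add_im_sq, hu, one_pow]
  have hnorm : x ^ 2 ≤ z.re ^ 2 + z.im ^ 2 :=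
    Complex.sq_norm_eq_re_sq_add_im_sq z ▸ pow_le_pow_left₀ hx.le hz 2
  have hρ : 0 ≤ ρ := (abs_nonneg _).trans hb
  obtain ⟨hb1, hb2⟩ := abs_le.1 hb
  have hkey : (x * u.re - z.re) * (x * u.re + z.re) ≤ 2 * ρ * x * u.im + ρ ^ 2 := by
    have hsq : (z.im - x * u.im) ^ 2 ≤ ρ ^ 2 := sq_le_sq' hb1 hb2
    nlinarith [mul_le_mul_of_nonneg_right hb2 (mul_nonneg hx.le hs)]
  have hdiv : x * u.re - z.re ≤ (2 * ρ * x * u.im + ρ ^ 2) / (x / 2) := by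
    rcases le_or_gt (x * u.re - z.re) 0 with h | h
    · exact h.trans (by positivity)
    · rw [le_div_iff₀ (by positivity)]
      have hsum : x / 2 ≤ x * u.re + z.re := by nlinarith
      nlinarith [mul_le_mul_of_nonneg_left hsum h.le]
  have hw : (2 * ρ * x * u.im + ρ ^ 2) / (x / 2) = 4 * ρ * u.im + 2 * ρ ^ 2 / x := by
    field_simp; ring
  linarith

theorem rect_diff_cylinder_subset (hu : ‖u‖ = 1) (hc : 1 / 2 ≤ u.re) (hs : 0 ≤ u.im)
    (hx : 0 < x) (hρ : 0 ≤ ρ) (hρl : ρ ≤ l) (hlx : l ≤ x / 2) :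
    Icc (x * u.re - l) (x * u.re) ×ℂ Icc (x * u.im - ρ) (x * u.im + ρ) \
        ((segment ℝ 0 (x • u) + ball 0 ρ) ∩ ball 0 x) ⊆
      Icc (x * u.re - (4 * ρ * u.im + 2 * ρ ^ 2 / x)) (x * u.re) ×ℂ
          Icc (x * u.im - ρ) (x * u.im + ρ) ∪
        Icc (x * u.re - l) (x * u.re) ×ℂ Icc (x * u.im + ρ - l * u.im) (x * u.im + ρ) ∪
        Icc (x * u.re - l) (x * u.re) ×ℂ Icc (x * u.im - ρ) (x * u.im - ρ + l * u.im) := by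
  rintro z ⟨⟨⟨ha1, ha2⟩, hb1, hb2⟩, hz⟩
  by_cases htop : x * u.im + ρ - l * u.im ≤ z.im
  · exact Or.inl (Or.inr ⟨⟨ha1, ha2⟩, htop, hb2⟩)
  by_cases hbot : z.im ≤ x * u.im - ρ + l * u.im
  · exact Or.inr ⟨⟨ha1, ha2⟩, hb1, hbot⟩
  rw [not_le] at htop hbot
  have hcx : x / 2 ≤ x * u.re := by nlinarith
  have hnorm : x ≤ ‖z‖ := by
    by_contra! hlt
    refine hz ⟨Complex.mem_segment_add_ball_of_mul_conj hu ?_ hlt.le ?_, mem_ball_zero_iff.2 hlt⟩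
    · exact re_mul_conj_nonneg_of_mem_rect hu (by linarith) hs (by linarith) hρ (by linarith)
        ⟨ha1, hb1⟩
    · exact abs_im_mul_conj_lt_of_mem_rect hu (by linarith) hs ⟨⟨ha1, ha2⟩, hbot, htop⟩
  have hwidth := sub_le_re_of_le_norm (ρ := ρ) hu hc hs hx (by linarith)
    (abs_le.2 ⟨by linarith, by linarith⟩) hnorm
  exact Or.inl (Or.inl ⟨⟨hwidth, ha2⟩, hb1, hb2⟩)

theorem measureReal_rect_diff_cylinder_le (hu : ‖u‖ = 1) (hc : 1 / 2 ≤ u.re) (hs : 0 ≤ u.im)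
    (hx : 0 < x) (hρ : 0 ≤ ρ) (hρl : ρ ≤ l) (hlx : l ≤ x / 2) :
    volume.real (Icc (x * u.re - l) (x * u.re) ×ℂ Icc (x * u.im - ρ) (x * u.im + ρ) \
        ((segment ℝ 0 (x • u) + ball 0 ρ) ∩ ball 0 x)) ≤
      (4 * ρ * u.im + 2 * ρ ^ 2 / x) * (2 * ρ) + 2 * (l * (l * u.im)) := by
  have hl : 0 ≤ l := hρ.trans hρl
  have hls : 0 ≤ l * u.im := mul_nonneg hl hs
  have hw : 0 ≤ 4 * ρ * u.im + 2 * ρ ^ 2 / x := by positivity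
  have hrect : ∀ a b c d : ℝ, volume (Icc a b ×ℂ Icc c d) ≠ ⊤ := fun a b c d =>
    (isCompact_Icc.reProdIm isCompact_Icc).measure_ne_top
  refine (measureReal_mono (rect_diff_cylinder_subset hu hc hs hx hρ hρl hlx)
    (measure_union_ne_top (measure_union_ne_top (hrect _ _ _ _) (hrect _ _ _ _))
      (hrect _ _ _ _))).trans ?_
  refine (measureReal_union_le _ _).trans ((add_le_add_left (measureReal_union_le _ _) _).trans ?_)
  rw [Complex.measureReal_reProdIm_Icc, Complex.measureReal_reProdIm_Icc,
    Complex.measureReal_reProdIm_Icc]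
  all_goals linarith

end Rectangle

/-- Deterministic area estimate: for `X = x e^{iθ}` with `x` large and `θ` small, the
part of the horizontal rectangle `X + [-l;0] × [-ρ;ρ]` lying outside the radial cylinder
`Cyl(X,ρ) = ([0;X] ⊕ B(0,ρ)) ∩ B(0,x)` has area at most `c₀ (l²θ + 1/x)`, for
`ρ ≤ l ≤ x/2`, with constants depending only on `ρ`. -/
theorem rectangle_minus_cylinder_area (ρ : ℝ) (hρ : 0 < ρ) :
    ∃ c₀ x₀ θ₀ : ℝ, 0 < c₀ ∧ 0 < x₀ ∧ 0 < θ₀ ∧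
      ∀ x θ l : ℝ, x₀ ≤ x → 0 ≤ θ → θ ≤ θ₀ → ρ ≤ l → l ≤ x / 2 →
        (volume
          ({z : ℂ | x * Real.cos θ - l ≤ z.re ∧ z.re ≤ x * Real.cos θ ∧
              |z.im - x * Real.sin θ| ≤ ρ} \
            ((segment ℝ 0 ((x : ℂ) * Complex.exp ((θ : ℂ) * Complex.I))
                + Metric.ball (0 : ℂ) ρ) ∩ Metric.ball (0 : ℂ) x))).toReal
          ≤ c₀ * (l ^ 2 * θ + 1 / x) := by
  refine ⟨10 + 4 * ρ ^ 3, 1, 1, by positivity, one_pos, one_pos, ?_⟩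
  intro x θ l hx hθ0 hθ1 hρl hlx
  set u := Complex.exp (θ * Complex.I)
  have hu : ‖u‖ = 1 := Complex.norm_exp_ofReal_mul_I θ
  have hre : u.re = cos θ := Complex.exp_ofReal_mul_I_re θ
  have him : u.im = sin θ := Complex.exp_ofReal_mul_I_im θ
  have hcos : 1 / 2 ≤ u.re := by nlinarith [one_sub_sq_div_two_le_cos (x := θ)]
  have hsin : 0 ≤ u.im := him ▸ sin_nonneg_of_nonneg_of_le_pi hθ0 (by linarith [pi_gt_three])
  have hsθ : u.im ≤ θ := him ▸ sin_le hθ0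
  clear_value u
  have hrect : {z : ℂ | x * cos θ - l ≤ z.re ∧ z.re ≤ x * cos θ ∧ |z.im - x * sin θ| ≤ ρ} =
      Icc (x * u.re - l) (x * u.re) ×ℂ Icc (x * u.im - ρ) (x * u.im + ρ) := by
    ext z
    simp only [mem_ofPred_eq, Complex.mem_reProdIm, mem_Icc, abs_le, hre, him]
    exact ⟨fun ⟨h1, h2, h3, h4⟩ => ⟨⟨h1, h2⟩, by linarith, by linarith⟩,
      fun ⟨⟨h1, h2⟩, h3, h4⟩ => ⟨h1, h2, by linarith, by linarith⟩⟩
  rw [hrect, ← Complex.real_smul]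
  refine (measureReal_rect_diff_cylinder_le hu hcos hsin
    (by linarith) hρ.le hρl hlx).trans ?_
  have hρθ : ρ ^ 2 * u.im ≤ l ^ 2 * θ :=
    mul_le_mul (pow_le_pow_left₀ hρ.le hρl 2) hsθ hsin (sq_nonneg l)
  have hlθ : l ^ 2 * u.im ≤ l ^ 2 * θ := mul_le_mul_of_nonneg_left hsθ (sq_nonneg l)
  have hx1 : 0 ≤ 1 / x := by positivity
  calc _ = 8 * (ρ ^ 2 * u.im) + 2 * (l ^ 2 * u.im) + 4 * ρ ^ 3 * (1 / x) := by ring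
    _ ≤ 10 * (l ^ 2 * θ) + 4 * ρ ^ 3 * (1 / x) := by linarith
    _ ≤ _ := by nlinarith [mul_nonneg (pow_nonneg hρ.le 3) (mul_nonneg (sq_nonneg l) hθ0)]
end

section
/- Let $X\in(\mathbb{R}_+)^2$, let $\mathcal{D}$ be the horizontal line through $X$, $\mathcal{D}'$ the tangent line to the circle $S(O,|X|)$ at $X$, and $\mathcal{D}''$ the image of $\mathcal{D}$ under reflection across the line $(OX)$. Then $\mathcal{D}'$ is the angle bisector line of $\mathcal{D}$ and $\mathcal{D}''$ at $X$; consequently, for any point $A$ and its reflection $\mathrm{Sym}\,A$ across $(OX)$, one has $d(A,\mathcal{D})=d(\mathrm{Sym}\,A,\mathcal{D}'')$, and if $\mathrm{Sym}\,A$ lies on the same side as $\mathcal{D}''$ relative to $\mathcal{D}'$, then $d(A,\mathcal{D})\le d(\mathrm{Sym}\,A,\mathcal{D})$. -/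
/-!
Write `Sym z = u * conj z` with `u = X / conj X`, a unit complex number fixing `X`. The
reflection across the tangent at `X` is `z ↦ Sym (2X - z)`, and the point reflection
`z ↦ 2X - z` preserves the horizontal line through `X`; this gives the bisector property, and
`d(A, D) = d(Sym A, D'')` holds because `Sym` is an isometry. For the inequality put
`w = Sym A - X`, so that `A - X = Sym w`. Since `Sym w + w = 2 Re (conj X * w) * X / |X|²`, the
side condition and `0 ≤ Re X` give `Re (Sym w) ≤ -Re w ≤ 0`; as `|Sym w| = |w|`, the vertical
component of `Sym w` is at most that of `w`.
-/

open ComplexConjugate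

namespace Complex

/-- The reflection across the line through `0` and `X`: `X / conj X = exp (2 i arg X)`. -/
noncomputable def reflectAcross (X z : ℂ) : ℂ := X / conj X * conj z

section reflectAcross

variable {X : ℂ}

lemma reflectAcross_sub (z w : ℂ) :
    reflectAcross X (z - w) = reflectAcross X z - reflectAcross X w := by
  simp only [reflectAcross, map_sub, mul_sub]

lemma reflectAcross_self : reflectAcross X X = X := by
  rcases eq_or_ne X 0 with rfl | hX
  · simp [reflectAcross]
  · exact div_mul_cancel₀ X ((map_ne_zero conj).2 hX)

lemma norm_div_conj_self (hX : X ≠ 0) : ‖X / conj X‖ = 1 := by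
  rw [norm_div, norm_conj, div_self (norm_ne_zero_iff.2 hX)]

lemma norm_reflectAcross (hX : X ≠ 0) (z : ℂ) : ‖reflectAcross X z‖ = ‖z‖ := by
  rw [reflectAcross, norm_mul, norm_div_conj_self hX, norm_conj, one_mul]

lemma isometry_reflectAcross (hX : X ≠ 0) : Isometry (reflectAcross X) :=
  Isometry.of_dist_eq fun z w => by
    rw [dist_eq, dist_eq, ← reflectAcross_sub, norm_reflectAcross hX]

lemma reflectAcross_reflectAcross (hX : X ≠ 0) (z : ℂ) :
    reflectAcross X (reflectAcross X z) = z := by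
  have hX' : conj X ≠ 0 := (map_ne_zero conj).2 hX
  simp only [reflectAcross, map_mul, map_div₀, conj_conj]
  field_simp

lemma reflectAcross_add_self (hX : X ≠ 0) (w : ℂ) :
    reflectAcross X w + w = ((2 * (conj X * w).re : ℝ) : ℂ) * (conj X)⁻¹ := by
  have hX' : conj X ≠ 0 := (map_ne_zero conj).2 hX
  rw [reflectAcross, ofReal_mul, re_eq_add_conj, map_mul, conj_conj]
  field_simp
  push_cast
  ring

lemma reflectAcross_add_self_re (hX : X ≠ 0) (w : ℂ) :
    (reflectAcross X w + w).re = 2 * (conj X * w).re * X.re / normSq X := by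
  rw [reflectAcross_add_self hX, re_ofReal_mul, inv_re, normSq_conj, conj_re, mul_div_assoc]

lemma re_reflectAcross_le_neg_re (hX : X ≠ 0) (hre : 0 ≤ X.re) {w : ℂ}
    (hw : (conj X * w).re ≤ 0) : (reflectAcross X w).re ≤ -w.re := by
  have h := reflectAcross_add_self_re hX w
  rw [add_re] at h
  have : 2 * (conj X * w).re * X.re / normSq X ≤ 0 :=
    div_nonpos_of_nonpos_of_nonneg
      (mul_nonpos_of_nonpos_of_nonneg (by linarith) hre) (normSq_nonneg X)
  linarith

end reflectAcross

lemma abs_im_le_abs_im_of_norm_eq {v w : ℂ} (hnorm : ‖v‖ = ‖w‖) (hw : 0 ≤ w.re)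
    (hvw : v.re ≤ -w.re) : |v.im| ≤ |w.im| := by
  rw [← sq_le_sq, ← sq_norm_sub_sq_re, ← sq_norm_sub_sq_re, hnorm, sub_le_sub_iff_left, sq_le_sq,
    abs_of_nonneg hw]
  exact (le_neg.1 hvw).trans (neg_le_abs _)

lemma infDist_setOf_im_eq (A : ℂ) (c : ℝ) :
    Metric.infDist A {z : ℂ | z.im = c} = |A.im - c| := by
  have hfoot : (⟨A.re, c⟩ : ℂ) ∈ {z : ℂ | z.im = c} := rfl
  refine le_antisymm ?_ ((Metric.le_infDist ⟨_, hfoot⟩).2 fun z hz => ?_)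
  · refine (Metric.infDist_le_dist_of_mem hfoot).trans_eq ?_
    rw [dist_eq_re_im]
    simp [Real.sqrt_sq_eq_abs]
  · rw [dist_eq, ← show z.im = c from hz, ← sub_im]
    exact abs_im_le_norm _

lemma image_two_mul_sub_setOf_im_eq (X : ℂ) :
    (fun z => 2 * X - z) '' {z : ℂ | z.im = X.im} = {z : ℂ | z.im = X.im} := by
  rw [Function.Involutive.image_eq_preimage_symm fun z => sub_sub_cancel (2 * X) z]
  ext z
  simp only [Set.mem_preimage, Set.mem_ofPred_eq, sub_im, mul_im, re_ofNat, im_ofNat, zero_mul,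
    add_zero]
  constructor <;> intro h <;> linarith

end Complex

open Complex

theorem tangent_bisector_reflection_general (X : ℂ) (hX : X ≠ 0)
    (hre : 0 ≤ X.re) :
    (((fun z => X - X / (starRingEnd ℂ X) * starRingEnd ℂ (z - X)) ''
        {z : ℂ | z.im = X.im})
      = (fun z => X / (starRingEnd ℂ X) * starRingEnd ℂ z) '' {z : ℂ | z.im = X.im}) ∧
    (∀ A : ℂ, Metric.infDist A {z : ℂ | z.im = X.im}
      = Metric.infDist (X / (starRingEnd ℂ X) * starRingEnd ℂ A)
          ((fun z => X / (starRingEnd ℂ X) * starRingEnd ℂ z) '' {z : ℂ | z.im = X.im})) ∧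
    (∀ A : ℂ,
      (starRingEnd ℂ X * (X / (starRingEnd ℂ X) * starRingEnd ℂ A - X)).re ≤ 0 →
      X.re ≤ (X / (starRingEnd ℂ X) * starRingEnd ℂ A).re →
      Metric.infDist A {z : ℂ | z.im = X.im}
        ≤ Metric.infDist (X / (starRingEnd ℂ X) * starRingEnd ℂ A)
            {z : ℂ | z.im = X.im}) := by
  have htangent : (fun z => X - X / conj X * conj (z - X)) =
      reflectAcross X ∘ fun z => 2 * X - z := by
    funext z
    rw [Function.comp_apply, show 2 * X - z = X - (z - X) by ring, reflectAcross_sub,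
      reflectAcross_self]
    rfl
  refine ⟨?_, fun A => (Metric.infDist_image (isometry_reflectAcross hX)).symm, ?_⟩
  · rw [htangent, Set.image_comp, image_two_mul_sub_setOf_im_eq]
    rfl
  · intro A hside hright
    set w := reflectAcross X A - X
    have hA : A - X = reflectAcross X w := by
      rw [reflectAcross_sub, reflectAcross_reflectAcross hX, reflectAcross_self]
    rw [infDist_setOf_im_eq, infDist_setOf_im_eq, ← sub_im, ← sub_im, hA]
    exact abs_im_le_abs_im_of_norm_eq (norm_reflectAcross hX w) (by simpa [w] using hright)
      (re_reflectAcross_le_neg_re hX hre hside)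

/-- Plane geometry behind the star-ancestor comparison: let `X` be a point of the first
quadrant, `D` the horizontal line through `X`, `D'` the tangent to the circle `S(0,|X|)`
at `X`, `Sym` the reflection across the line `(0X)` and `D'' = Sym(D)`. Then the
reflection across `D'` maps `D` onto `D''` (i.e. `D'` bisects `D` and `D''` at `X`);
`d(A, D) = d(Sym A, D'')` for every `A`; and if `Sym A` lies on the side of `D'`
containing the relevant half of `D''` (on the disk side of `D'`, with abscissa at least
that of `X`), then `d(A, D) ≤ d(Sym A, D)`. -/
theorem tangent_bisector_reflection (X : ℂ) (hX : X ≠ 0)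
    (hre : 0 ≤ X.re) (him : 0 ≤ X.im) :
    (((fun z => X - X / (starRingEnd ℂ X) * starRingEnd ℂ (z - X)) ''
        {z : ℂ | z.im = X.im})
      = (fun z => X / (starRingEnd ℂ X) * starRingEnd ℂ z) '' {z : ℂ | z.im = X.im}) ∧
    (∀ A : ℂ, Metric.infDist A {z : ℂ | z.im = X.im}
      = Metric.infDist (X / (starRingEnd ℂ X) * starRingEnd ℂ A)
          ((fun z => X / (starRingEnd ℂ X) * starRingEnd ℂ z) '' {z : ℂ | z.im = X.im})) ∧
    (∀ A : ℂ,
      (starRingEnd ℂ X * (X / (starRingEnd ℂ X) * starRingEnd ℂ A - X)).re ≤ 0 →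
      X.re ≤ (X / (starRingEnd ℂ X) * starRingEnd ℂ A).re →
      Metric.infDist A {z : ℂ | z.im = X.im}
        ≤ Metric.infDist (X / (starRingEnd ℂ X) * starRingEnd ℂ A)
            {z : ℂ | z.im = X.im}) :=
  tangent_bisector_reflection_general X hX hre
end
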